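/- arXiv:1806.07565 — 2 statements merged into one kernel-verified Lean document; each statement's English description precedes it below -/
import Mathlib

section
/- Let b_1, ..., b_{K-1} be nonnegative real numbers satisfying \sum_{j=1}^{K-1} b_j \geq N (K - r) and \sum_{j=1}^{K-1} (j - 1) b_j \leq (c - 1) N K. Then (1/(N K)) \sum_{j=1}^{K-1} b_j / j \geq lambda*c + mu. -/
/-- Arithmetic core of the converse (chain of inequalities (bound2)): if the nonnegative reals
`b 1, …, b (K-1)` satisfy `∑_{j=1}^{K-1} b j ≥ N (K - r)` and
`∑_{j=1}^{K-1} (j - 1) b j ≤ (c - 1) N K`, then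
`(1/(N K)) ∑_{j=1}^{K-1} b j / j ≥ lam * c + mu`. -/
theorem stmt9 (K : ℕ) (hK : 2 ≤ K) (N : ℝ) (hN : 0 < N)
    (r : ℝ) (hr1 : 1 ≤ r) (hrK : r < K) (c : ℝ) (hc : 1 ≤ c)
    (g1 g2 : ℕ) (hg1 : 0 < g1) (hg2 : g2 = g1 + 1) (hg2K : g2 ≤ K - 1)
    (c1 c2 lam mu : ℝ)
    (hc1 : c1 = r / K + (1 - r / K) * g1)
    (hc2 : c2 = r / K + (1 - r / K) * g2)
    (hlam : lam = 1 / g2 - 1 / g1)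
    (hmu : mu = c2 / g1 - c1 / g2)
    (b : ℕ → ℝ) (hb0 : ∀ j, 0 ≤ b j)
    (hb1 : N * ((K : ℝ) - r) ≤ ∑ j ∈ Finset.Icc 1 (K - 1), b j)
    (hb2 : ∑ j ∈ Finset.Icc 1 (K - 1), ((j : ℝ) - 1) * b j ≤ (c - 1) * (N * K)) :
    (1 / (N * K)) * ∑ j ∈ Finset.Icc 1 (K - 1), b j / j ≥ lam * c + mu := by
  have hg1r : (0:ℝ) < (g1:ℝ) := by exact_mod_cast hg1
  have hg2r : (0:ℝ) < (g2:ℝ) := by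
    have : 0 < g2 := by omega
    exact_mod_cast this
  have hKr : (0:ℝ) < (K:ℝ) := by
    have : 0 < K := by omega
    exact_mod_cast this
  have hg2c : (g2:ℝ) = (g1:ℝ) + 1 := by exact_mod_cast hg2
  obtain ⟨A, hA⟩ : ∃ A : ℝ, A = 1 / (g1:ℝ) - lam * ((g1:ℝ) - 1) := ⟨_, rfl⟩
  have hlam0 : lam ≤ 0 := by
    rw [hlam]
    have : 1 / (g2:ℝ) ≤ 1 / (g1:ℝ) := by
      apply one_div_le_one_div_of_le hg1r
      linarith [hg2c]
    linarith
  have hA0 : 0 ≤ A := by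
    have h1 : 0 ≤ -lam * ((g1:ℝ) - 1) := by
      apply mul_nonneg (by linarith)
      have : (1:ℝ) ≤ (g1:ℝ) := by exact_mod_cast hg1
      linarith
    have h2 : 0 < 1 / (g1:ℝ) := by positivity
    rw [hA]; linarith
  -- pointwise chord bound
  have key : ∀ j ∈ Finset.Icc 1 (K-1),
      (A + lam * ((j:ℝ) - 1)) * b j ≤ b j / j := by
    intro j hj
    have hj1 : 1 ≤ j := (Finset.mem_Icc.mp hj).1
    have hjr : (0:ℝ) < (j:ℝ) := by exact_mod_cast hj1
    have hprod : 0 ≤ ((j:ℝ) - g1) * ((j:ℝ) - g2) := by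
      rcases le_or_gt j g1 with h | h
      · have h1 : (j:ℝ) ≤ (g1:ℝ) := by exact_mod_cast h
        have hrw : ((j:ℝ) - g1) * ((j:ℝ) - g2) = ((g1:ℝ) - j) * ((g2:ℝ) - j) := by ring
        rw [hrw]
        apply mul_nonneg <;> linarith [hg2c]
      · have h2 : (g2:ℝ) ≤ (j:ℝ) := by
          have : g2 ≤ j := by omega
          exact_mod_cast this
        apply mul_nonneg <;> linarith [hg2c]
    have hline : A + lam * ((j:ℝ) - 1) ≤ 1 / (j:ℝ) := by
      rw [← sub_nonneg]
      have hid : 1 / (j:ℝ) - (A + lam * ((j:ℝ) - 1))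
          = ((j:ℝ) - g1) * ((j:ℝ) - g2) / ((j:ℝ) * g1 * g2) := by
        rw [hA, hlam, hg2c]
        field_simp
        ring
      rw [hid]
      positivity
    calc (A + lam * ((j:ℝ) - 1)) * b j ≤ (1 / (j:ℝ)) * b j :=
          mul_le_mul_of_nonneg_right hline (hb0 j)
      _ = b j / j := by ring
  have hsum : A * (∑ j ∈ Finset.Icc 1 (K-1), b j)
      + lam * (∑ j ∈ Finset.Icc 1 (K-1), ((j:ℝ) - 1) * b j)
      ≤ ∑ j ∈ Finset.Icc 1 (K-1), b j / j := by
    have h := Finset.sum_le_sum key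
    have hexp : ∑ j ∈ Finset.Icc 1 (K-1), (A + lam * ((j:ℝ) - 1)) * b j
        = A * (∑ j ∈ Finset.Icc 1 (K-1), b j)
        + lam * (∑ j ∈ Finset.Icc 1 (K-1), ((j:ℝ) - 1) * b j) := by
      rw [Finset.mul_sum, Finset.mul_sum, ← Finset.sum_add_distrib]
      exact Finset.sum_congr rfl fun j _ => by ring
    rw [hexp] at h
    exact h
  have h1 : A * (N * ((K:ℝ) - r)) ≤ A * (∑ j ∈ Finset.Icc 1 (K-1), b j) :=
    mul_le_mul_of_nonneg_left hb1 hA0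
  have h2 : lam * ((c - 1) * (N * K)) ≤
      lam * (∑ j ∈ Finset.Icc 1 (K-1), ((j:ℝ) - 1) * b j) :=
    mul_le_mul_of_nonpos_left hb2 hlam0
  have hT : A * (N * ((K:ℝ) - r)) + lam * ((c - 1) * (N * K))
      ≤ ∑ j ∈ Finset.Icc 1 (K-1), b j / j := by linarith
  have heq : (1 / (N * K)) * (A * (N * ((K:ℝ) - r)) + lam * ((c - 1) * (N * K)))
      = lam * c + mu := by
    rw [hA, hlam, hmu, hc1, hc2, hg2c]
    field_simp
    ring
  have hpos : (0:ℝ) < 1 / (N * K) := by positivity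
  calc lam * c + mu
      = (1 / (N * K)) * (A * (N * ((K:ℝ) - r)) + lam * ((c - 1) * (N * K))) := heq.symm
    _ ≤ (1 / (N * K)) * ∑ j ∈ Finset.Icc 1 (K-1), b j / j :=
        mul_le_mul_of_nonneg_left hT hpos.le
end

section
/- If r is not an integer and one takes g1 = floor(r) and g2 = ceil(r) = g1 + 1 in the definition of lambda and mu, then the point (c*(r), L*(r)) lies on the line x \mapsto lambda*x + mu; that is, lambda * c*(r) + mu = L*(r). -/
/-- If `r` is not an integer and one takes `g1 = ⌊r⌋` and `g2 = ⌈r⌉ = g1 + 1` in the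
definition of `lam` and `mu`, then the point `(c*(r), L*(r))` lies on the line
`x ↦ lam*x + mu`, i.e. `lam * c*(r) + mu = L*(r)`. -/
theorem stmt10 (K : ℕ) (hK : 2 ≤ K) (r : ℝ) (hr1 : 1 ≤ r) (hrK : r < K)
    (hrint : ∀ n : ℤ, r ≠ n)
    (gr cstar Lstar : ℝ)
    (hgr : gr = (⌊r⌋ : ℝ) + (r - (⌊r⌋ : ℝ)) * ((K : ℝ) - (⌈r⌉ : ℝ)) / ((K : ℝ) - r))
    (hcs : cstar = r / K + (1 - r / K) * gr)
    (hLs : Lstar = ((⌊r⌋ : ℝ) + (⌈r⌉ : ℝ) - r) / ((⌊r⌋ : ℝ) * (⌈r⌉ : ℝ)) - 1 / K)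
    (g1 g2 : ℤ) (hg1 : g1 = ⌊r⌋) (hg2 : g2 = ⌈r⌉)
    (c1 c2 lam mu : ℝ)
    (hc1 : c1 = r / K + (1 - r / K) * g1)
    (hc2 : c2 = r / K + (1 - r / K) * g2)
    (hlam : lam = 1 / g2 - 1 / g1)
    (hmu : mu = c2 / g1 - c1 / g2) :
    lam * cstar + mu = Lstar := by
  have hceil : (⌈r⌉ : ℤ) = ⌊r⌋ + 1 := by
    have h1 : ⌊r⌋ < ⌈r⌉ := by
      have : (⌊r⌋ : ℝ) < r := lt_of_le_of_ne (Int.floor_le r) (fun h => (hrint ⌊r⌋ h.symm))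
      exact_mod_cast this.trans_le (Int.le_ceil r)
    have h2 : ⌈r⌉ ≤ ⌊r⌋ + 1 := Int.ceil_le_floor_add_one r
    omega
  have hf1 : (1 : ℝ) ≤ (⌊r⌋ : ℝ) := by exact_mod_cast Int.le_floor.2 (by exact_mod_cast hr1)
  have hf0 : (⌊r⌋ : ℝ) ≠ 0 := by linarith
  have hf10 : (⌊r⌋ : ℝ) + 1 ≠ 0 := by linarith
  have hKr : (K : ℝ) - r ≠ 0 := by linarith
  have hK0 : (K : ℝ) ≠ 0 := by positivity
  have hceilR : (⌈r⌉ : ℝ) = (⌊r⌋ : ℝ) + 1 := by exact_mod_cast hceil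
  subst hg1 hg2 hgr hcs hLs hc1 hc2 hlam hmu
  rw [hceilR]
  clear hceil hceilR hrint
  generalize ((⌊r⌋ : ℤ) : ℝ) = f at *
  have hr0 : r ≠ 0 := by linarith
  field_simp
  ring
end
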